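/- arXiv:2508.00662 — 7 statements merged into one kernel-verified Lean document; each statement's English description precedes it below -/
import Mathlib

section
/- Let F be a field and let Q be a finite quiver, and let (A, b) be a path algebra of Q over F. Then A is PI if and only if every vertex of Q lies on at most one cycle, i.e., any two cycles of Q that share a common vertex have the same set of arrows. -/
structure Quiv where
  V : Type
  A : Type
  [fintV : Fintype V]
  [fintA : Fintype A]
  s : A → V
  t : A → V

attribute [instance] Quiv.fintV Quiv.fintA

inductive Quiv.IsPathFrom (Q : Quiv) : Q.V → List Q.A → Q.V → Prop
  | nil (v : Q.V) : Q.IsPathFrom v [] v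
  | cons {l : List Q.A} {v : Q.V} (a : Q.A) :
      Q.IsPathFrom (Q.t a) l v → Q.IsPathFrom (Q.s a) (a :: l) v

/-- A path in a quiver: a start vertex, a compatible list of arrows, and an end vertex. -/
structure Quiv.QPath (Q : Quiv) where
  src : Q.V
  arrows : List Q.A
  tgt : Q.V
  isPath : Q.IsPathFrom src arrows tgt

theorem Quiv.IsPathFrom.append {Q : Quiv} {u v w : Q.V} {l l' : List Q.A}
    (h1 : Q.IsPathFrom u l v) : Q.IsPathFrom v l' w → Q.IsPathFrom u (l ++ l') w := by
  induction h1 with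
  | nil _ => exact id
  | cons a _ ih => exact fun h2 => .cons a (ih h2)

/-- The lazy path at a vertex. -/
def Quiv.QPath.lazy (Q : Quiv) (v : Q.V) : Q.QPath := ⟨v, [], v, .nil v⟩

/-- Concatenation of composable paths. -/
def Quiv.QPath.comp {Q : Quiv} (p q : Q.QPath) (h : p.tgt = q.src) : Q.QPath :=
  ⟨p.src, p.arrows ++ q.arrows, q.tgt, p.isPath.append (h.symm ▸ q.isPath)⟩

/-- The length-one path given by a single arrow. -/
def Quiv.QPath.ofArrow (Q : Quiv) (a : Q.A) : Q.QPath :=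
  ⟨Q.s a, [a], Q.t a, .cons a (.nil _)⟩

/-- A path algebra of the quiver `Q` over `F`: an `F`-algebra `A` together with a basis
`b` indexed by the paths of `Q`, multiplying by concatenation. -/
structure PathAlgebra (F : Type) [Field F] (Q : Quiv) (A : Type) [Ring A] [Algebra F A] where
  b : Q.QPath → A
  indep : LinearIndependent F b
  spans : Submodule.span F (Set.range b) = ⊤
  mul_comp : ∀ (p q : Q.QPath) (h : p.tgt = q.src), b p * b q = b (p.comp q h)
  mul_zero : ∀ p q : Q.QPath, p.tgt ≠ q.src → b p * b q = 0
  sum_lazy : ∑ v : Q.V, b (Quiv.QPath.lazy Q v) = 1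

/-- `f` is a polynomial identity for the `F`-algebra `A`. -/
def IsPolyId (F : Type) [Field F] (A : Type) [Ring A] [Algebra F A]
    (f : FreeAlgebra F ℕ) : Prop :=
  ∀ φ : FreeAlgebra F ℕ →ₐ[F] A, φ f = 0

/-- `A` is a PI algebra: it has a nonzero polynomial identity. -/
def IsPI (F : Type) [Field F] (A : Type) [Ring A] [Algebra F A] : Prop :=
  ∃ f : FreeAlgebra F ℕ, f ≠ 0 ∧ IsPolyId F A f

/-- A cycle: a nonempty closed path with pairwise distinct source vertices. -/
def Quiv.QPath.IsCycle {Q : Quiv} (c : Q.QPath) : Prop :=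
  c.arrows ≠ [] ∧ c.tgt = c.src ∧ (c.arrows.map Q.s).Nodup

/-- The standard identity `St_N` holds in `A`. -/
def SatisfiesStandardIdentity (A : Type) [Ring A] (N : ℕ) : Prop :=
  ∀ a : Fin N → A,
    ∑ σ : Equiv.Perm (Fin N), (Equiv.Perm.sign σ : ℤ) • (List.ofFn fun i => a (σ i)).prod = 0

/-!
If two cycles through a vertex `v` have different arrows, say `x` lies on the first only,
rotating them gives closed walks `a ∋ x` and `b ∌ x` at `v`. The closed walks `a bⁱ` (`i ∈ ℕ`)
concatenate injectively, because the occurrences of `x` mark where each block begins, so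
`xᵢ ↦ a bⁱ` sends distinct monomials of the free algebra to distinct basis paths (after
multiplying by `e_v` on the left) and no nonzero polynomial vanishes on `A`.

Conversely, if every vertex lies on at most one cycle, a path is determined by its start and the
multiset of its arrows: where two such paths first differ, both continue into closed walks whose
cycles share a vertex but have different arrows leaving it. Hence `p ↦ x^p E_{s(p), t(p)}`, with
commuting variables indexed by the arrows, embeds `A` into `n × n` matrices over a polynomial
ring, which satisfy the standard identity of degree `n² + 1`.
-/

open Module

section StandardIdentity

theorem FreeAlgebra.basisFreeMonoid_apply (R X : Type*) [CommSemiring R] (w : FreeMonoid X) :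
    FreeAlgebra.basisFreeMonoid R X w = (w.toList.map (FreeAlgebra.ι R)).prod := by
  simp [FreeAlgebra.basisFreeMonoid, FreeAlgebra.equivMonoidAlgebraFreeMonoid,
    FreeMonoid.lift_apply]

noncomputable def standardPolynomial (F : Type) [Field F] (N : ℕ) : FreeAlgebra F ℕ :=
  ∑ σ : Equiv.Perm (Fin N),
    (Equiv.Perm.sign σ : ℤ) • (List.ofFn fun i => FreeAlgebra.ι F (σ i : ℕ)).prod

theorem standardPolynomial_ne_zero (F : Type) [Field F] (N : ℕ) :
    standardPolynomial F N ≠ 0 := by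
  let word (σ : Equiv.Perm (Fin N)) : FreeMonoid ℕ := .ofList (List.ofFn fun i => (σ i : ℕ))
  have hword : Function.Injective word := fun σ τ h => by
    ext i
    exact congrFun (List.ofFn_injective (FreeMonoid.ofList.injective h)) i
  have hsum : ∑ σ, ((Equiv.Perm.sign σ : ℤ) : F) • FreeAlgebra.basisFreeMonoid F ℕ (word σ) =
      standardPolynomial F N := by
    simp [word, standardPolynomial, FreeAlgebra.basisFreeMonoid_apply, List.map_ofFn,
      Function.comp_def, Int.cast_smul_eq_zsmul]
  intro h
  have := Fintype.linearIndependent_iff.mp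
    ((FreeAlgebra.basisFreeMonoid F ℕ).linearIndependent.comp _ hword) _ (hsum.trans h) 1
  simp at this

theorem SatisfiesStandardIdentity.isPI {F : Type} [Field F] {A : Type} [Ring A] [Algebra F A]
    {N : ℕ} (h : SatisfiesStandardIdentity A N) : IsPI F A :=
  ⟨standardPolynomial F N, standardPolynomial_ne_zero F N, fun φ => by
    simpa [standardPolynomial, map_list_prod, List.map_ofFn, Function.comp_def] using
      h fun i => φ (FreeAlgebra.ι F i)⟩

theorem SatisfiesStandardIdentity.of_injective {A B : Type} [Ring A] [Ring B] {N : ℕ}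
    (ι : A →+* B) (hι : Function.Injective ι) (hB : SatisfiesStandardIdentity B N) :
    SatisfiesStandardIdentity A N := by
  intro a
  apply hι
  simpa [map_list_prod, List.map_ofFn, Function.comp_def] using hB (ι ∘ a)

/-- `St_N` is the alternatization of the product of `N` factors, and an alternating map vanishes
on a free module of rank less than `N`. -/
theorem satisfiesStandardIdentity_of_basis {C ι : Type*} {B : Type} [CommRing C] [Ring B]
    [Algebra C B] [Fintype ι] (e : Basis ι C B) {N : ℕ} (hN : Fintype.card ι < N) :
    SatisfiesStandardIdentity B N := by
  have hzero : MultilinearMap.alternatization (MultilinearMap.mkPiAlgebraFin C N B) = 0 :=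
    e.ext_alternating fun v hv => absurd (Fintype.card_le_of_injective v hv) (by simpa using hN)
  intro a
  simpa [MultilinearMap.alternatization_apply, Units.smul_def] using DFunLike.congr_fun hzero a

theorem Matrix.satisfiesStandardIdentity (V C : Type) [Fintype V] [DecidableEq V] [CommRing C] :
    SatisfiesStandardIdentity (Matrix V V C) (Fintype.card V * Fintype.card V + 1) :=
  satisfiesStandardIdentity_of_basis (Matrix.stdBasis C V V) (by simp [Fintype.card_prod])

end StandardIdentity

namespace Quiv

variable {Q : Quiv}

theorem QPath.ext {p q : Q.QPath} (hs : p.src = q.src) (ha : p.arrows = q.arrows)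
    (ht : p.tgt = q.tgt) : p = q := by
  cases p; cases q
  cases hs; cases ha; cases ht
  rfl

theorem isPathFrom_cons_iff {u w : Q.V} {a : Q.A} {l : List Q.A} :
    Q.IsPathFrom u (a :: l) w ↔ u = Q.s a ∧ Q.IsPathFrom (Q.t a) l w := by
  constructor
  · rintro ⟨⟩; exact ⟨rfl, by assumption⟩
  · rintro ⟨rfl, h⟩; exact .cons a h

theorem isPathFrom_append_iff {u w : Q.V} {l₁ l₂ : List Q.A} :
    Q.IsPathFrom u (l₁ ++ l₂) w ↔ ∃ m, Q.IsPathFrom u l₁ m ∧ Q.IsPathFrom m l₂ w := by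
  refine ⟨fun h => ?_, fun ⟨m, h₁, h₂⟩ => h₁.append h₂⟩
  induction l₁ generalizing u with
  | nil => exact ⟨u, .nil u, h⟩
  | cons a l ih =>
    obtain ⟨rfl, htail⟩ := isPathFrom_cons_iff.mp h
    obtain ⟨m, h₁, h₂⟩ := ih htail
    exact ⟨m, .cons a h₁, h₂⟩

namespace IsPathFrom

variable {u w : Q.V} {l : List Q.A}

theorem exists_of_mem (h : Q.IsPathFrom u l w) {x : Q.A} (hx : x ∈ l) :
    ∃ pre suf, l = pre ++ x :: suf ∧ Q.IsPathFrom u pre (Q.s x) ∧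
      Q.IsPathFrom (Q.t x) suf w := by
  obtain ⟨pre, suf, rfl⟩ := List.append_of_mem hx
  obtain ⟨m, hpre, hsuf⟩ := isPathFrom_append_iff.mp h
  obtain ⟨rfl, hsuf'⟩ := isPathFrom_cons_iff.mp hsuf
  exact ⟨pre, suf, rfl, hpre, hsuf'⟩

theorem exists_rotate (h : Q.IsPathFrom u l u) {x : Q.A} (hx : x ∈ l) :
    ∃ l', Q.IsPathFrom (Q.s x) l' (Q.s x) ∧ l'.Perm l := by
  obtain ⟨pre, suf, rfl, hpre, hsuf⟩ := h.exists_of_mem hx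
  exact ⟨x :: suf ++ pre, (IsPathFrom.cons x hsuf).append hpre, List.perm_append_comm⟩

theorem flatten_replicate (h : Q.IsPathFrom u l u) (k : ℕ) :
    Q.IsPathFrom u (List.replicate k l).flatten u := by
  induction k with
  | zero => exact .nil u
  | succ k ih => simpa [List.replicate_succ] using h.append ih

/-- Shortcutting at the first repeated vertex, as in `SimpleGraph.Walk.bypass`. -/
theorem exists_nodup (h : Q.IsPathFrom u l w) :
    ∃ l', Q.IsPathFrom u l' w ∧ (w :: l'.map Q.s).Nodup := by
  induction h with
  | nil v => exact ⟨[], .nil v, by simp⟩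
  | @cons l w a _ ih =>
    obtain ⟨l', hl', hnd⟩ := ih
    by_cases hw : Q.s a = w
    · exact ⟨[], hw ▸ .nil _, by simp⟩
    by_cases hmem : Q.s a ∈ l'.map Q.s
    · obtain ⟨y, hy, hya⟩ := List.mem_map.mp hmem
      obtain ⟨pre, suf, rfl, -, hsuf⟩ := hl'.exists_of_mem hy
      refine ⟨y :: suf, hya ▸ .cons y hsuf, hnd.sublist ?_⟩
      exact ((List.sublist_append_right pre (y :: suf)).map Q.s).cons_cons w
    · refine ⟨a :: l', .cons a hl', ?_⟩
      simp only [List.map_cons, List.nodup_cons, List.mem_cons] at hnd ⊢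
      tauto

theorem exists_cycle {a : Q.A} (h : Q.IsPathFrom (Q.t a) l (Q.s a)) :
    ∃ c : Q.QPath, c.IsCycle ∧ a ∈ c.arrows := by
  obtain ⟨l', hl', hnd⟩ := h.exists_nodup
  exact ⟨⟨Q.s a, a :: l', Q.s a, .cons a hl'⟩, ⟨List.cons_ne_nil _ _, rfl, hnd⟩, by simp⟩

end IsPathFrom

namespace QPath.IsCycle

variable {c : Q.QPath}

theorem eq_of_src_eq (hc : c.IsCycle) {x y : Q.A} (hx : x ∈ c.arrows) (hy : y ∈ c.arrows)
    (hxy : Q.s x = Q.s y) : x = y :=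
  List.inj_on_of_nodup_map hc.2.2 hx hy hxy

theorem exists_closed (hc : c.IsCycle) {v : Q.V} (hv : v ∈ c.arrows.map Q.s) :
    ∃ l, Q.IsPathFrom v l v ∧ l.Perm c.arrows := by
  obtain ⟨x, hx, rfl⟩ := List.mem_map.mp hv
  exact (hc.2.1 ▸ c.isPath).exists_rotate hx

end QPath.IsCycle

def AtMostOneCyclePerVertex (Q : Quiv) : Prop :=
  ∀ c₁ c₂ : Q.QPath, c₁.IsCycle → c₂.IsCycle →
    (∃ v : Q.V, v ∈ c₁.arrows.map Q.s ∧ v ∈ c₂.arrows.map Q.s) →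
    (∀ a : Q.A, a ∈ c₁.arrows ↔ a ∈ c₂.arrows)

namespace AtMostOneCyclePerVertex

theorem eq_of_src_eq (H : Q.AtMostOneCyclePerVertex) {a a' : Q.A} {l l' : List Q.A}
    (hs : Q.s a = Q.s a') (h : Q.IsPathFrom (Q.t a) l (Q.s a))
    (h' : Q.IsPathFrom (Q.t a') l' (Q.s a')) : a = a' := by
  obtain ⟨c, hc, ha⟩ := h.exists_cycle
  obtain ⟨c', hc', ha'⟩ := h'.exists_cycle
  have hshare : ∃ v, v ∈ c.arrows.map Q.s ∧ v ∈ c'.arrows.map Q.s :=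
    ⟨Q.s a, List.mem_map_of_mem ha, hs ▸ List.mem_map_of_mem ha'⟩
  exact hc'.eq_of_src_eq ((H c c' hc hc' hshare a).mp ha) ha' hs

theorem eq_of_perm (H : Q.AtMostOneCyclePerVertex) {u v₁ v₂ : Q.V} {l₁ l₂ : List Q.A}
    (h₁ : Q.IsPathFrom u l₁ v₁) (h₂ : Q.IsPathFrom u l₂ v₂) (hperm : l₁.Perm l₂) : l₁ = l₂ := by
  induction h₁ generalizing l₂ with
  | nil => exact (List.perm_nil.mp hperm.symm).symm
  | @cons r₁ w a h₁ ih =>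
    obtain _ | ⟨a', r₂⟩ := l₂
    · exact absurd hperm.length_eq (by simp)
    obtain ⟨hs, h₂⟩ := isPathFrom_cons_iff.mp h₂
    obtain rfl : a = a' := by
      by_contra hne
      have ha' : a' ∈ r₁ :=
        (List.mem_cons.mp (hperm.mem_iff.mpr List.mem_cons_self)).resolve_left (Ne.symm hne)
      have ha : a ∈ r₂ :=
        (List.mem_cons.mp (hperm.mem_iff.mp List.mem_cons_self)).resolve_left hne
      obtain ⟨pre, -, -, hpre, -⟩ := h₁.exists_of_mem ha'
      obtain ⟨pre', -, -, hpre', -⟩ := h₂.exists_of_mem ha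
      exact hne (H.eq_of_src_eq hs (hs ▸ hpre) (hs ▸ hpre'))
    rw [ih h₂ hperm.cons_inv]

end AtMostOneCyclePerVertex

end Quiv

namespace List

variable {α : Type*}

def blockCode (a b : List α) (u : List ℕ) : List α :=
  u.flatMap fun i => a ++ (replicate i b).flatten

variable {a b : List α} {x : α}

@[simp]
theorem blockCode_nil : blockCode a b [] = [] := rfl

theorem blockCode_cons (i : ℕ) (u : List ℕ) :
    blockCode a b (i :: u) = a ++ ((replicate i b).flatten ++ blockCode a b u) := by
  simp [blockCode]

theorem mem_blockCode_iff (hxa : x ∈ a) {u : List ℕ} : x ∈ blockCode a b u ↔ u ≠ [] := by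
  cases u <;> simp [blockCode, hxa]

/-- Compare the first occurrences of `x`: a nonempty code has it at the same place as `a`. -/
theorem eq_zero_of_blockCode_eq [DecidableEq α] (hxa : x ∈ a) (hxb : x ∉ b) (hb : b ≠ [])
    {k : ℕ} {u u' : List ℕ} (h : blockCode a b u = (replicate k b).flatten ++ blockCode a b u') :
    k = 0 := by
  have hxk : x ∉ (replicate k b).flatten := by simp [hxb]
  rcases u with _ | ⟨i, u⟩
  · simpa [hb] using (append_eq_nil_iff.mp h.symm).1
  have hu' : u' ≠ [] := by
    rw [← mem_blockCode_iff (b := b) hxa]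
    simpa [h, hxk] using (mem_blockCode_iff (b := b) hxa).mpr (cons_ne_nil i u)
  obtain ⟨j, u', rfl⟩ := exists_cons_of_ne_nil hu'
  have := congrArg (idxOf x) h
  rw [blockCode_cons, blockCode_cons, idxOf_append_of_notMem hxk, idxOf_append_of_mem hxa,
    idxOf_append_of_mem hxa] at this
  simpa [hb] using this

theorem eq_of_blockCode_cons_eq [DecidableEq α] (hxa : x ∈ a) (hxb : x ∉ b) (hb : b ≠ [])
    {i j : ℕ} {u u' : List ℕ} (h : blockCode a b (i :: u) = blockCode a b (j :: u'))
    (hij : i ≤ j) : i = j ∧ blockCode a b u = blockCode a b u' := by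
  obtain ⟨d, rfl⟩ := Nat.exists_eq_add_of_le hij
  rw [blockCode_cons, blockCode_cons, replicate_add, flatten_append, append_assoc] at h
  have h' := append_cancel_left (append_cancel_left h)
  obtain rfl := eq_zero_of_blockCode_eq hxa hxb hb h'
  simpa using h'

theorem blockCode_injective [DecidableEq α] (hxa : x ∈ a) (hxb : x ∉ b) (hb : b ≠ []) :
    Function.Injective (blockCode a b) := by
  intro u u' h
  induction u generalizing u' with
  | nil =>
    by_contra hne
    simpa [← h] using (mem_blockCode_iff (b := b) hxa (u := u')).mpr (Ne.symm hne)
  | cons i u ih =>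
    rcases u' with _ | ⟨j, u'⟩
    · simpa [h] using (mem_blockCode_iff (b := b) hxa (u := i :: u)).mpr (cons_ne_nil i u)
    obtain ⟨rfl, hu⟩ | ⟨rfl, hu⟩ := (le_total i j).imp (eq_of_blockCode_cons_eq hxa hxb hb h)
      (eq_of_blockCode_cons_eq hxa hxb hb h.symm)
    · rw [ih hu]
    · rw [ih hu.symm]

end List

namespace PathAlgebra

variable {F : Type} [Field F] {Q : Quiv} {A : Type} [Ring A] [Algebra F A]

noncomputable def basis (P : PathAlgebra F Q A) : Basis Q.QPath F A :=
  Basis.mk P.indep P.spans.ge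

@[simp]
theorem basis_apply (P : PathAlgebra F Q A) (p : Q.QPath) : P.basis p = P.b p :=
  Basis.mk_apply _ _ _

@[simp]
theorem basis_constr_b (P : PathAlgebra F Q A) {M : Type*} [AddCommGroup M] [Module F M]
    (g : Q.QPath → M) (p : Q.QPath) : P.basis.constr F g (P.b p) = g p := by
  rw [← P.basis_apply, Basis.constr_basis]

/-- The left factor `b (e_v)` is needed because the empty word goes to `1`, not to `b (e_v)`;
with it, the monomial `w` goes to the basis path `w.flatMap f`. -/
theorem not_isPI_of_flatMap_injective (P : PathAlgebra F Q A) {v : Q.V} (f : ℕ → List Q.A)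
    (hf : ∀ i, Q.IsPathFrom v (f i) v) (hinj : Function.Injective fun u : List ℕ => u.flatMap f) :
    ¬ IsPI F A := by
  have hclosed (u : List ℕ) : Q.IsPathFrom v (u.flatMap f) v := by
    induction u with
    | nil => exact .nil v
    | cons i u ih => simpa using (hf i).append ih
  let pw (u : List ℕ) : Q.QPath := ⟨v, u.flatMap f, v, hclosed u⟩
  have hmul (u u' : List ℕ) : P.b (pw u) * P.b (pw u') = P.b (pw (u ++ u')) := by
    rw [P.mul_comp _ _ rfl]
    exact congrArg P.b (Quiv.QPath.ext rfl (by simp [pw, Quiv.QPath.comp]) rfl)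
  let φ := FreeAlgebra.lift F fun i => P.b (pw [i])
  have hprod (l u : List ℕ) :
      P.b (pw u) * (l.map fun i => φ (FreeAlgebra.ι F i)).prod = P.b (pw (u ++ l)) := by
    induction l generalizing u with
    | nil => simp
    | cons i l ih =>
      rw [List.map_cons, List.prod_cons, ← mul_assoc, FreeAlgebra.lift_ι_apply, hmul, ih]
      simp
  let L : FreeAlgebra F ℕ →ₗ[F] A :=
    LinearMap.mulLeft F (P.b (Quiv.QPath.lazy Q v)) ∘ₗ φ.toLinearMap
  have hbasis (w : FreeMonoid ℕ) : L (FreeAlgebra.basisFreeMonoid F ℕ w) = P.b (pw w.toList) := by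
    have hnil : pw [] = Quiv.QPath.lazy Q v := rfl
    simpa [L, hnil, FreeAlgebra.basisFreeMonoid_apply, map_list_prod, Function.comp_def] using
      hprod w.toList []
  have hL : Function.Injective L := by
    rw [← (FreeAlgebra.basisFreeMonoid F ℕ).constr_self F L]
    apply Basis.injective_constr_of_linearIndependent
    simp only [hbasis]
    exact P.indep.comp _ fun w w' h =>
      FreeMonoid.toList.injective (hinj (congrArg Quiv.QPath.arrows h))
  rintro ⟨g, hg0, hg⟩
  exact hg0 (hL (by simp [L, hg φ]))

theorem not_isPI_of_isCycle (P : PathAlgebra F Q A) {c c' : Q.QPath} (hc : c.IsCycle)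
    (hc' : c'.IsCycle) {v : Q.V} (hv : v ∈ c.arrows.map Q.s) (hv' : v ∈ c'.arrows.map Q.s)
    {x : Q.A} (hx : x ∈ c.arrows) (hx' : x ∉ c'.arrows) : ¬ IsPI F A := by
  classical
  obtain ⟨a, ha, hperm⟩ := hc.exists_closed hv
  obtain ⟨b, hb, hperm'⟩ := hc'.exists_closed hv'
  refine P.not_isPI_of_flatMap_injective _ (fun i => ha.append (hb.flatten_replicate i))
    (List.blockCode_injective (hperm.mem_iff.mpr hx) (mt hperm'.mem_iff.mp hx') ?_)
  rintro rfl
  exact hc'.1 (List.perm_nil.mp hperm'.symm)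

end PathAlgebra

section MatrixEmbedding

variable {F : Type} [Field F] {Q : Quiv} [DecidableEq Q.V] [DecidableEq Q.A]

variable (F) in
noncomputable def Quiv.QPath.toMatrix (p : Q.QPath) :
    Matrix Q.V Q.V (MvPolynomial Q.A F) :=
  Matrix.single p.src p.tgt (MvPolynomial.monomial (Multiset.toFinsupp p.arrows) 1)

theorem Quiv.QPath.toMatrix_comp (p q : Q.QPath) (h : p.tgt = q.src) :
    (p.comp q h).toMatrix F = p.toMatrix F * q.toMatrix F := by
  simp [toMatrix, comp, h, Matrix.single_mul_single_same, MvPolynomial.monomial_mul,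
    ← Multiset.coe_add]

theorem Quiv.QPath.toMatrix_mul_of_ne {p q : Q.QPath} (h : p.tgt ≠ q.src) :
    p.toMatrix F * q.toMatrix F = 0 := by
  simp [toMatrix, h]

theorem Quiv.AtMostOneCyclePerVertex.linearIndependent_toMatrix
    (H : Q.AtMostOneCyclePerVertex) : LinearIndependent F (Quiv.QPath.toMatrix (Q := Q) F) := by
  let e := (MvPolynomial.basisMonomials Q.A F).smulTower
    (Matrix.stdBasis (MvPolynomial Q.A F) Q.V Q.V)
  have he : QPath.toMatrix F =
      e ∘ fun p : Q.QPath => (Multiset.toFinsupp p.arrows, (p.src, p.tgt)) := by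
    funext p
    simp [e, QPath.toMatrix, Basis.smulTower_apply, Matrix.stdBasis_eq_single, Matrix.smul_single]
  rw [he]
  refine e.linearIndependent.comp _ fun p q hpq => ?_
  simp only [Prod.mk.injEq, EmbeddingLike.apply_eq_iff_eq, Multiset.coe_eq_coe] at hpq
  obtain ⟨hperm, hs, ht⟩ := hpq
  exact QPath.ext hs (H.eq_of_perm p.isPath (hs ▸ q.isPath) hperm) ht

variable {A : Type} [Ring A] [Algebra F A]

noncomputable def PathAlgebra.toMatrix (P : PathAlgebra F Q A) :
    A →ₐ[F] Matrix Q.V Q.V (MvPolynomial Q.A F) :=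
  AlgHom.ofLinearMap (P.basis.constr F (Quiv.QPath.toMatrix F))
    (by
      rw [← P.sum_lazy, map_sum, ← Matrix.sum_single_one]
      simp [Quiv.QPath.toMatrix, Quiv.QPath.lazy])
    (by
      refine (LinearMap.map_mul_iff _).mpr (P.basis.ext fun p => P.basis.ext fun q => ?_)
      by_cases h : p.tgt = q.src
      · simp [P.mul_comp p q h, Quiv.QPath.toMatrix_comp p q h]
      · simp [P.mul_zero p q h, Quiv.QPath.toMatrix_mul_of_ne h])

theorem PathAlgebra.toMatrix_injective (P : PathAlgebra F Q A) (H : Q.AtMostOneCyclePerVertex) :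
    Function.Injective P.toMatrix :=
  P.basis.injective_constr_of_linearIndependent (R₂ := F) H.linearIndependent_toMatrix

end MatrixEmbedding

theorem PathAlgebra.isPI_of_atMostOneCyclePerVertex {F : Type} [Field F] {Q : Quiv} {A : Type}
    [Ring A] [Algebra F A] (P : PathAlgebra F Q A) (H : Q.AtMostOneCyclePerVertex) :
    IsPI F A := by
  classical
  exact ((Matrix.satisfiesStandardIdentity Q.V (MvPolynomial Q.A F)).of_injective
    P.toMatrix.toRingHom (P.toMatrix_injective H)).isPI

/-- A finite quiver is PI iff every vertex lies on at most one cycle,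
i.e. any two cycles sharing a common vertex have the same set of arrows. -/
theorem pathAlgebra_isPI_iff (F : Type) [Field F] (Q : Quiv)
    (A : Type) [Ring A] [Algebra F A] (P : PathAlgebra F Q A) :
    IsPI F A ↔
      ∀ c₁ c₂ : Q.QPath, c₁.IsCycle → c₂.IsCycle →
        (∃ v : Q.V, v ∈ c₁.arrows.map Q.s ∧ v ∈ c₂.arrows.map Q.s) →
        (∀ a : Q.A, a ∈ c₁.arrows ↔ a ∈ c₂.arrows) := by
  refine ⟨fun hPI c₁ c₂ hc₁ hc₂ ⟨v, hv₁, hv₂⟩ x => ?_, P.isPI_of_atMostOneCyclePerVertex⟩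
  by_contra hx
  by_cases h₁ : x ∈ c₁.arrows
  · exact P.not_isPI_of_isCycle hc₁ hc₂ hv₁ hv₂ h₁ (fun h₂ => hx (iff_of_true h₁ h₂)) hPI
  · exact P.not_isPI_of_isCycle hc₂ hc₁ hv₂ hv₁ ((not_iff.mp hx).mp h₁) h₁ hPI
end

section
/- Let F be a field, Q a finite quiver, and (A, b) a path algebra of Q over F. Suppose c₁ and c₂ are two distinct cycles of Q both starting and ending at the same vertex v (distinct as paths based at v). Then the unique F-algebra homomorphism φ : FreeAlgebra F (Fin 2) → A sending the two free generators to b(c₁) and b(c₂) respectively is injective; consequently A is not PI. -/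
/-!
Every cycle through `v` meets `v` only at its first arrow, so cycles based at `v` form a prefix
code in the arrows: a concatenation of such cycles can be cut back into its factors at the arrows
leaving `v`. Hence distinct words in `c₁, c₂` give distinct paths, whose images under `b` are
linearly independent; so the free algebra on two generators embeds in `A`. It contains the free
algebra on countably many generators (via `xₙ ↦ y₁ y₀ⁿ`, again a prefix code), and an algebra
into which the free algebra of countable rank embeds satisfies no nonzero identity.
-/

open Function

section MarkedCode

variable {α γ : Type*}

def IsMarkedBlock (p : α → Bool) (l : List α) : Prop :=
  ∃ a r, l = a :: r ∧ p a ∧ ∀ x ∈ r, p x = false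

theorem IsMarkedBlock.isChain {p : α → Bool} {l : List α} (h : IsMarkedBlock p l) :
    l.IsChain fun _ y => !p y := by
  obtain ⟨a, r, rfl, -, hr⟩ := h
  induction r generalizing a with
  | nil => exact .singleton a
  | cons x r ih =>
    exact .cons_cons (by simp [hr x (by simp)]) (ih x fun y hy => hr y (by simp [hy]))

theorem List.splitBy_flatten_of_isMarkedBlock {p : α → Bool} {B : List (List α)}
    (hB : ∀ l ∈ B, IsMarkedBlock p l) : B.flatten.splitBy (fun _ y => !p y) = B := by
  refine List.splitBy_flatten (fun h => ?_) (fun l hl => (hB l hl).isChain) ?_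
  · obtain ⟨a, r, h, -⟩ := hB [] h
    exact List.cons_ne_nil a r h.symm
  refine (List.pairwise_of_forall_mem_list fun l hl l' hl' => ?_).isChain
  obtain ⟨a, r, rfl, -⟩ := hB l hl
  obtain ⟨a', r', rfl, ha', -⟩ := hB l' hl'
  exact ⟨List.cons_ne_nil a r, List.cons_ne_nil a' r', by simpa using ha'⟩

theorem FreeMonoid.lift_injective_of_isMarkedBlock {p : α → Bool} {J : γ → FreeMonoid α}
    (hJ : Injective J) (hblock : ∀ x, IsMarkedBlock p (J x).toList) :
    Injective (FreeMonoid.lift J) := by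
  have key : ∀ w : FreeMonoid γ, (FreeMonoid.lift J w).toList.splitBy (fun _ y => !p y) =
      w.toList.map (FreeMonoid.toList ∘ J) := fun w => by
    rw [FreeMonoid.lift_apply, FreeMonoid.toList_prod, List.map_map]
    exact List.splitBy_flatten_of_isMarkedBlock (by simpa using fun x _ => hblock x)
  intro w₁ w₂ h
  have := (key w₁).symm.trans ((congrArg _ (congrArg FreeMonoid.toList h)).trans (key w₂))
  exact FreeMonoid.toList.injective
    (List.map_injective_iff.mpr (FreeMonoid.toList.injective.comp hJ) this)

end MarkedCode

namespace FreeAlgebra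

variable {R X : Type*} [CommSemiring R]

theorem basisFreeMonoid_apply_s2 (w : FreeMonoid X) :
    basisFreeMonoid R X w = FreeMonoid.lift (ι R) w := by
  simp [basisFreeMonoid, equivMonoidAlgebraFreeMonoid]

theorem lift_freeMonoidLift_ι {A : Type*} [Semiring A] [Algebra R A] (f : X → A)
    (w : FreeMonoid X) : lift R f (FreeMonoid.lift (ι R) w) = FreeMonoid.lift f w := by
  change ((lift R f : FreeAlgebra R X →* A).comp (FreeMonoid.lift (ι R))) w = _
  rw [FreeMonoid.comp_lift]
  congr 2
  ext x
  simp

theorem injective_of_linearIndependent {M : Type*} [AddCommMonoid M] [Module R M]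
    (φ : FreeAlgebra R X →ₗ[R] M)
    (h : LinearIndependent R fun w : FreeMonoid X => φ (FreeMonoid.lift (ι R) w)) :
    Injective φ := by
  rw [← (basisFreeMonoid R X).constr_self R φ]
  exact (basisFreeMonoid R X).injective_constr_of_linearIndependent
    (by simpa only [basisFreeMonoid_apply_s2] using h)

theorem lift_injective_of_injective {Y : Type*} (J : X → FreeMonoid Y)
    (hJ : Injective (FreeMonoid.lift J)) :
    Injective (lift R fun x => FreeMonoid.lift (ι R) (J x)) := by
  refine injective_of_linearIndependent (lift R _).toLinearMap ?_
  have : (fun w : FreeMonoid X => (lift R fun x => FreeMonoid.lift (ι R) (J x)).toLinearMap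
      (FreeMonoid.lift (ι R) w)) = basisFreeMonoid R Y ∘ FreeMonoid.lift J := by
    funext w
    rw [AlgHom.toLinearMap_apply, lift_freeMonoidLift_ι, comp_apply, basisFreeMonoid_apply_s2,
      ← MonoidHom.comp_apply, FreeMonoid.comp_lift]
    rfl
  rw [this]
  exact (basisFreeMonoid R Y).linearIndependent.comp _ hJ

end FreeAlgebra

section Paths

variable {Q : Quiv}

theorem Quiv.QPath.ext_s2 {p q : Q.QPath} (hs : p.src = q.src) (ha : p.arrows = q.arrows)
    (ht : p.tgt = q.tgt) : p = q := by
  cases p; cases q; cases hs; cases ha; cases ht; rfl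

theorem Quiv.IsPathFrom.head_src {u w : Q.V} {a : Q.A} {l : List Q.A}
    (h : Q.IsPathFrom u (a :: l) w) : Q.s a = u := by
  cases h; rfl

theorem Quiv.QPath.IsCycle.isMarkedBlock [DecidableEq Q.V] {c : Q.QPath} (h : c.IsCycle) :
    IsMarkedBlock (fun a => decide (Q.s a = c.src)) c.arrows := by
  obtain ⟨hne, -, hnd⟩ := h
  have hpath := c.isPath
  obtain ⟨a, r, hc⟩ := List.exists_cons_of_ne_nil hne
  rw [hc] at hpath hnd
  have ha : Q.s a = c.src := hpath.head_src
  refine ⟨a, r, hc, by simpa using ha, fun x hx => ?_⟩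
  rw [List.map_cons, List.nodup_cons] at hnd
  simpa [← ha] using fun hxa : Q.s x = Q.s a => hnd.1 (hxa ▸ List.mem_map_of_mem hx)

def Quiv.QPath.loopWord {ι : Type*} {v : Q.V} (c : ι → Q.QPath) (hs : ∀ i, (c i).src = v)
    (ht : ∀ i, (c i).tgt = v) (w : FreeMonoid ι) : Q.QPath where
  src := v
  arrows := (FreeMonoid.lift (fun i => FreeMonoid.ofList (c i).arrows) w).toList
  tgt := v
  isPath := by
    induction w using FreeMonoid.recOn with
    | one => exact .nil v
    | of_mul i w ih =>
      rw [map_mul, FreeMonoid.lift_eval_of, FreeMonoid.toList_mul]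
      exact (hs i ▸ ht i ▸ (c i).isPath).append ih

variable {ι : Type*} {v : Q.V} {c : ι → Q.QPath}

theorem Quiv.QPath.loopWord_injective [DecidableEq Q.V] (hc : ∀ i, (c i).IsCycle)
    (hs : ∀ i, (c i).src = v) (ht : ∀ i, (c i).tgt = v) (hinj : Injective c) :
    Injective (Quiv.QPath.loopWord c hs ht) := by
  have hJ : Injective fun i => FreeMonoid.ofList (c i).arrows := fun i j h =>
    hinj (Quiv.QPath.ext_s2 ((hs i).trans (hs j).symm) h ((ht i).trans (ht j).symm))
  have hblock : ∀ i, IsMarkedBlock (fun a => decide (Q.s a = v)) (c i).arrows := fun i =>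
    hs i ▸ (hc i).isMarkedBlock
  exact fun w₁ w₂ h => FreeMonoid.lift_injective_of_isMarkedBlock hJ hblock
    (FreeMonoid.toList.injective (congrArg Quiv.QPath.arrows h))

namespace PathAlgebra

variable {F : Type} [Field F] {A : Type} [Ring A] [Algebra F A] (P : PathAlgebra F Q A)
  (hs : ∀ i, (c i).src = v) (ht : ∀ i, (c i).tgt = v)

theorem b_loopWord_mul_lift (u w : FreeMonoid ι) :
    P.b (Quiv.QPath.loopWord c hs ht u) * FreeMonoid.lift (P.b ∘ c) w =
      P.b (Quiv.QPath.loopWord c hs ht (u * w)) := by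
  induction w using FreeMonoid.recOn generalizing u with
  | one => simp
  | of_mul i w ih =>
    rw [map_mul, FreeMonoid.lift_eval_of, ← mul_assoc, comp_apply, P.mul_comp _ _ (hs i).symm,
      ← mul_assoc, ← ih]
    congr 2
    exact Quiv.QPath.ext_s2 rfl (by simp [Quiv.QPath.comp, Quiv.QPath.loopWord]) (ht i)

theorem b_lazy_mul_lift (w : FreeMonoid ι) :
    P.b (Quiv.QPath.lazy Q v) * FreeMonoid.lift (P.b ∘ c) w =
      P.b (Quiv.QPath.loopWord c hs ht w) := by
  have hlazy : Quiv.QPath.lazy Q v = Quiv.QPath.loopWord c hs ht 1 :=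
    Quiv.QPath.ext_s2 rfl (by simp [Quiv.QPath.lazy, Quiv.QPath.loopWord]) rfl
  rw [hlazy, P.b_loopWord_mul_lift, one_mul]

theorem lift_injective_of_loopWord_injective (h : Injective (Quiv.QPath.loopWord c hs ht)) :
    Injective (FreeAlgebra.lift F (P.b ∘ c)) := by
  -- `b (e_v)` is not `1`, so monomials are compared after left multiplication by it.
  have hmul : Injective (LinearMap.mulLeft F (P.b (Quiv.QPath.lazy Q v)) ∘ₗ
      (FreeAlgebra.lift F (P.b ∘ c)).toLinearMap) := by
    refine FreeAlgebra.injective_of_linearIndependent _ ?_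
    simp only [LinearMap.comp_apply, AlgHom.toLinearMap_apply, FreeAlgebra.lift_freeMonoidLift_ι,
      LinearMap.mulLeft_apply, P.b_lazy_mul_lift hs ht]
    exact P.indep.comp _ h
  exact Injective.of_comp hmul

end PathAlgebra

theorem PathAlgebra.lift_injective_of_isCycle {F : Type} [Field F] {A : Type} [Ring A]
    [Algebra F A] (P : PathAlgebra F Q A) (hc : ∀ i, (c i).IsCycle) (hs : ∀ i, (c i).src = v)
    (hinj : Injective c) : Injective (FreeAlgebra.lift F (P.b ∘ c)) := by
  classical
  have ht i : (c i).tgt = v := (hc i).2.1.trans (hs i)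
  exact P.lift_injective_of_loopWord_injective hs ht
    (Quiv.QPath.loopWord_injective hc hs ht hinj)

end Paths

theorem FreeAlgebra.exists_injective_nat_fin_two (R : Type*) [CommSemiring R] :
    ∃ φ : FreeAlgebra R ℕ →ₐ[R] FreeAlgebra R (Fin 2), Injective φ := by
  let J n : FreeMonoid (Fin 2) := FreeMonoid.ofList (1 :: List.replicate n 0)
  have hJ : Injective J := fun m n h => by
    simpa [J] using congrArg (List.length ∘ FreeMonoid.toList) h
  have hblock n : IsMarkedBlock (fun x => decide (x = 1)) (J n).toList :=
    ⟨1, List.replicate n 0, rfl, by simp, by simp [List.mem_replicate]⟩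
  exact ⟨_, lift_injective_of_injective J (FreeMonoid.lift_injective_of_isMarkedBlock hJ hblock)⟩

theorem not_isPI_of_injective {F : Type} [Field F] {A : Type} [Ring A] [Algebra F A]
    {φ : FreeAlgebra F ℕ →ₐ[F] A} (hφ : Injective φ) : ¬IsPI F A := fun ⟨f, hf, hid⟩ =>
  hf (hφ (by rw [hid φ, map_zero]))

/-- If `c₁ ≠ c₂` are two cycles based at the same vertex `v`, then the
algebra map from the free algebra on two generators sending the generators to `b c₁`, `b c₂`
is injective; consequently the path algebra is not PI. -/
theorem pathAlgebra_not_PI_of_two_cycles (F : Type) [Field F] (Q : Quiv)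
    (A : Type) [Ring A] [Algebra F A] (P : PathAlgebra F Q A)
    (v : Q.V) (c₁ c₂ : Q.QPath) (h₁ : c₁.IsCycle) (h₂ : c₂.IsCycle)
    (hv₁ : c₁.src = v) (hv₂ : c₂.src = v) (hne : c₁ ≠ c₂) :
    Function.Injective
      (FreeAlgebra.lift F ![P.b c₁, P.b c₂] : FreeAlgebra F (Fin 2) →ₐ[F] A) ∧
    ¬ IsPI F A := by
  have hinj : Injective ![c₁, c₂] := by
    intro i j
    fin_cases i <;> fin_cases j <;> simp [hne, hne.symm]
  have hb : P.b ∘ ![c₁, c₂] = ![P.b c₁, P.b c₂] := by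
    funext i
    fin_cases i <;> rfl
  have hlift : Injective (FreeAlgebra.lift F ![P.b c₁, P.b c₂]) := hb ▸
    P.lift_injective_of_isCycle (v := v) (by simp [Fin.forall_fin_two, h₁, h₂])
      (by simp [Fin.forall_fin_two, hv₁, hv₂]) hinj
  obtain ⟨ψ, hψ⟩ := FreeAlgebra.exists_injective_nat_fin_two F
  exact ⟨hlift, not_isPI_of_injective (φ := (FreeAlgebra.lift F _).comp ψ) (hlift.comp hψ)⟩
end

section
/- Let F be a field, let Q be a finite acyclic quiver (Q has no path of length ≥ 1 with equal start and end) in which every path has length at most m−1 (m ≥ 1), and let (A, b) be a path algebra of Q over F. Then for all a₁,…,a_{2m} ∈ A one has [a₁,a₂][a₃,a₄]⋯[a_{2m−1},a_{2m}] = 0, where [a,b] = ab − ba; that is, u_m is a polynomial identity for A. -/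
/-!
Let `J_k` be the span of the basis vectors of paths of length at least `k`; concatenation adds
lengths, so `J_k J_l ⊆ J_{k+l}`. Modulo `J_1` only the lazy paths survive, and they are orthogonal
idempotents, so every commutator lies in `J_1`. A product of `m` commutators therefore lies in
`J_m`, which is zero because no path has length `m`.
-/

theorem Quiv.QPath.eq_lazy_of_arrows_eq_nil {Q : Quiv} {p : Q.QPath} (h : p.arrows = []) :
    p = Quiv.QPath.lazy Q p.src := by
  obtain ⟨u, l, v, hp⟩ := p
  subst h
  cases hp
  rfl

namespace PathAlgebra

variable {F : Type} [Field F] {Q : Quiv} {A : Type} [Ring A] [Algebra F A]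
  (P : PathAlgebra F Q A)

def spanLongPaths (k : ℕ) : Submodule F A :=
  Submodule.span F (P.b '' {p | k ≤ p.arrows.length})

theorem spanLongPaths_antitone : Antitone P.spanLongPaths := fun _ _ hjk =>
  Submodule.span_mono (Set.image_mono fun _ hp => le_trans hjk hp)

theorem spanLongPaths_zero : P.spanLongPaths 0 = ⊤ := by
  simp [spanLongPaths, ← P.spans, Set.image_univ]

theorem spanLongPaths_eq_bot {k : ℕ} (h : ∀ p : Q.QPath, p.arrows.length < k) :
    P.spanLongPaths k = ⊥ := by
  simp [spanLongPaths, fun p => (h p).not_ge]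

theorem b_mul_b_mem_spanLongPaths (p q : Q.QPath) :
    P.b p * P.b q ∈ P.spanLongPaths (p.arrows.length + q.arrows.length) := by
  by_cases h : p.tgt = q.src
  · rw [P.mul_comp p q h]
    exact Submodule.subset_span ⟨p.comp q h, by simp [Quiv.QPath.comp], rfl⟩
  · rw [P.mul_zero p q h]
    exact zero_mem _

theorem spanLongPaths_mul_le (k l : ℕ) :
    P.spanLongPaths k * P.spanLongPaths l ≤ P.spanLongPaths (k + l) := by
  rw [spanLongPaths, spanLongPaths, Submodule.span_mul_span, Submodule.span_le]
  rintro _ ⟨_, ⟨p, hp, rfl⟩, _, ⟨q, hq, rfl⟩, rfl⟩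
  exact P.spanLongPaths_antitone (add_le_add hp hq) (P.b_mul_b_mem_spanLongPaths p q)

theorem list_prod_mem_spanLongPaths {l : List A} (h : ∀ x ∈ l, x ∈ P.spanLongPaths 1) :
    l.prod ∈ P.spanLongPaths l.length := by
  induction l with
  | nil => simp [spanLongPaths_zero]
  | cons x l ih =>
    rw [List.forall_mem_cons] at h
    rw [List.prod_cons, List.length_cons, add_comm]
    exact P.spanLongPaths_mul_le 1 l.length (Submodule.mul_mem_mul h.1 (ih h.2))

theorem b_lazy_mul_b_lazy [DecidableEq Q.V] (u v : Q.V) :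
    P.b (.lazy Q u) * P.b (.lazy Q v) = if u = v then P.b (.lazy Q u) else 0 := by
  split_ifs with h
  · subst h
    exact P.mul_comp _ _ rfl
  · exact P.mul_zero _ _ h

theorem b_commutator_mem_spanLongPaths_one (p q : Q.QPath) :
    P.b p * P.b q - P.b q * P.b p ∈ P.spanLongPaths 1 := by
  classical
  by_cases hlazy : p.arrows = [] ∧ q.arrows = []
  · rw [Quiv.QPath.eq_lazy_of_arrows_eq_nil hlazy.1, Quiv.QPath.eq_lazy_of_arrows_eq_nil hlazy.2,
      b_lazy_mul_b_lazy, b_lazy_mul_b_lazy]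
    by_cases h : p.src = q.src
    · simp [h]
    · simp [h, Ne.symm h]
  · have hlen : 1 ≤ p.arrows.length + q.arrows.length := by
      rw [← List.length_eq_zero_iff, ← List.length_eq_zero_iff] at hlazy
      omega
    have hle := P.spanLongPaths_antitone hlen
    refine sub_mem (hle (P.b_mul_b_mem_spanLongPaths p q)) (hle ?_)
    rw [add_comm]
    exact P.b_mul_b_mem_spanLongPaths q p

theorem commutator_mem_spanLongPaths_one (x y : A) : x * y - y * x ∈ P.spanLongPaths 1 := by
  let c : A →ₗ[F] A →ₗ[F] A := LinearMap.mul F A - (LinearMap.mul F A).flip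
  have hc : Submodule.map₂ c ⊤ ⊤ ≤ P.spanLongPaths 1 := by
    rw [← P.spans, Submodule.map₂_span_span, Submodule.span_le]
    rintro _ ⟨_, ⟨p, rfl⟩, _, ⟨q, rfl⟩, rfl⟩
    exact P.b_commutator_mem_spanLongPaths_one p q
  exact hc (Submodule.apply_mem_map₂ c Submodule.mem_top Submodule.mem_top)

end PathAlgebra

theorem pathAlgebra_acyclic_product_of_commutators_general (F : Type) [Field F] (Q : Quiv)
    (A : Type) [Ring A] [Algebra F A] (P : PathAlgebra F Q A)
    (m : ℕ) (hm : 1 ≤ m)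
    (hbound : ∀ p : Q.QPath, p.arrows.length ≤ m - 1)
    (a : ℕ → A) :
    (List.ofFn fun i : Fin m =>
      a (2 * i.1) * a (2 * i.1 + 1) - a (2 * i.1 + 1) * a (2 * i.1)).prod = 0 := by
  have hJm : P.spanLongPaths m = ⊥ := P.spanLongPaths_eq_bot fun p => by
    have := hbound p
    omega
  have hprod := P.list_prod_mem_spanLongPaths
    (List.forall_mem_ofFn_iff.2 fun i : Fin m => P.commutator_mem_spanLongPaths_one
      (a (2 * i.1)) (a (2 * i.1 + 1)))
  rwa [List.length_ofFn, hJm, Submodule.mem_bot] at hprod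

/-- If `Q` is a finite acyclic quiver all of whose paths have length
at most `m − 1`, then `u_m` is a polynomial identity for a path algebra of `Q`:
any product of `m` commutators vanishes. -/
theorem pathAlgebra_acyclic_product_of_commutators (F : Type) [Field F] (Q : Quiv)
    (A : Type) [Ring A] [Algebra F A] (P : PathAlgebra F Q A)
    (m : ℕ) (hm : 1 ≤ m)
    (hacyclic : ∀ p : Q.QPath, p.arrows ≠ [] → p.src ≠ p.tgt)
    (hbound : ∀ p : Q.QPath, p.arrows.length ≤ m - 1)
    (a : ℕ → A) :
    (List.ofFn fun i : Fin m =>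
      a (2 * i.1) * a (2 * i.1 + 1) - a (2 * i.1 + 1) * a (2 * i.1)).prod = 0 :=
  pathAlgebra_acyclic_product_of_commutators_general F Q A P m hm hbound a
end

section
/- Let Σ be a finite quiver with m ≥ 1 arrows that admits a unicursal path: there is an enumeration β₁,…,β_m of all arrows of Σ, each arrow occurring exactly once, with t(β_h) = s(β_{h+1}) for all 1 ≤ h ≤ m−1. Suppose some arrow α of Σ lies on no oriented cycle, i.e., there is no path in Σ (of length ≥ 0) from t(α) to s(α). Then Σ minus α is disconnected: there is a partition of the vertex set Σ₀ into two disjoint sets V₁ and V₂ with s(α) ∈ V₁ and t(α) ∈ V₂ such that every arrow β ≠ α of Σ has both its source and its target in V₁, or both in V₂. -/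
lemma chain_path (S : Quiv) (m : ℕ) (β : Fin m → S.A)
    (hchain : ∀ i j : Fin m, (j : ℕ) = (i : ℕ) + 1 → S.t (β i) = S.s (β j)) :
    ∀ n : ℕ, ∀ i j : Fin m, (j : ℕ) = (i : ℕ) + n →
      ∃ p : S.QPath, p.src = S.t (β i) ∧ p.tgt = S.t (β j) := by
  intro n
  induction n with
  | zero =>
    intro i j h
    have : i = j := Fin.ext (by omega)
    subst this
    exact ⟨Quiv.QPath.lazy S (S.t (β i)), rfl, rfl⟩
  | succ n ih =>
    intro i j h
    have hj' : (i : ℕ) + n < m := by omega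
    obtain ⟨p, hp1, hp2⟩ := ih i ⟨(i : ℕ) + n, hj'⟩ rfl
    have hst : S.t (β ⟨(i : ℕ) + n, hj'⟩) = S.s (β j) := hchain _ j (by simp; omega)
    refine ⟨p.comp (Quiv.QPath.ofArrow S (β j)) (by rw [hp2]; exact hst), hp1, rfl⟩

/-- If a finite quiver `Σ` with `m ≥ 1` arrows admits a unicursal path
(an enumeration `β₁,…,β_m` of all arrows with `t(β_h) = s(β_{h+1})`) and some arrow `α`
lies on no oriented cycle (there is no path, of length `≥ 0`, from `t(α)` to `s(α)`),
then removing `α` disconnects the quiver. -/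
theorem unicursal_disconnecting_arrow (S : Quiv) (m : ℕ) (hm : 1 ≤ m)
    (β : Fin m → S.A) (hbij : Function.Bijective β)
    (hchain : ∀ i j : Fin m, (j : ℕ) = (i : ℕ) + 1 → S.t (β i) = S.s (β j))
    (α : S.A)
    (hα : ¬ ∃ p : S.QPath, p.src = S.t α ∧ p.tgt = S.s α) :
    ∃ V₁ V₂ : Set S.V,
      (∀ v : S.V, v ∈ V₁ ∨ v ∈ V₂) ∧
      (∀ v : S.V, ¬ (v ∈ V₁ ∧ v ∈ V₂)) ∧
      S.s α ∈ V₁ ∧ S.t α ∈ V₂ ∧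
      ∀ b : S.A, b ≠ α →
        (S.s b ∈ V₁ ∧ S.t b ∈ V₁) ∨ (S.s b ∈ V₂ ∧ S.t b ∈ V₂) := by
  classical
  obtain ⟨k, hk⟩ := hbij.2 α
  refine ⟨{v | ¬ ∃ p : S.QPath, p.src = S.t α ∧ p.tgt = v},
          {v | ∃ p : S.QPath, p.src = S.t α ∧ p.tgt = v}, ?_, ?_, ?_, ?_, ?_⟩
  · intro v; by_cases h : ∃ p : S.QPath, p.src = S.t α ∧ p.tgt = v
    · exact Or.inr h
    · exact Or.inl h
  · rintro v ⟨h1, h2⟩; exact h1 h2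
  · exact hα
  · exact ⟨Quiv.QPath.lazy S (S.t α), rfl, rfl⟩
  · intro b hb
    obtain ⟨j, hj⟩ := hbij.2 b
    have hjk : (j : ℕ) ≠ (k : ℕ) := by
      intro h; exact hb (by rw [← hj, Fin.ext h, hk])
    by_cases hlt : (j : ℕ) < (k : ℕ)
    · left
      have hk1 : (k : ℕ) - 1 < m := by omega
      obtain ⟨q, hq1, hq2⟩ :=
        chain_path S m β hchain ((k : ℕ) - 1 - (j : ℕ)) j ⟨(k : ℕ) - 1, hk1⟩ (by simp; omega)
      have hq2' : q.tgt = S.s α := by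
        rw [hq2, ← hk]; exact hchain _ k (by simp; omega)
      have htb : ¬ ∃ p : S.QPath, p.src = S.t α ∧ p.tgt = S.t b := by
        rintro ⟨p, hp1, hp2⟩
        exact hα ⟨p.comp q (by rw [hp2, hq1, hj]), hp1, hq2'⟩
      refine ⟨?_, htb⟩
      rintro ⟨p, hp1, hp2⟩
      exact htb ⟨p.comp (Quiv.QPath.ofArrow S b) (by rw [hp2]; rfl), hp1, rfl⟩
    · right
      have hlt' : (k : ℕ) < (j : ℕ) := by omega
      have hj1 : (j : ℕ) - 1 < m := by omega
      obtain ⟨p, hp1, hp2⟩ :=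
        chain_path S m β hchain ((j : ℕ) - 1 - (k : ℕ)) k ⟨(j : ℕ) - 1, hj1⟩ (by simp; omega)
      have hsb : p.tgt = S.s b := by
        rw [hp2, ← hj]; exact hchain _ j (by simp; omega)
      exact ⟨⟨p, by rw [hp1, hk], hsb⟩,
        ⟨p.comp (Quiv.QPath.ofArrow S b) (by rw [hsb]; rfl), by show p.src = S.t α; rw [hp1, hk], rfl⟩⟩
end

section
/- Let Q be a finite quiver in which any two cycles sharing a common vertex have the same set of arrows. Let p₁,…,p_m (m ≥ 1) be paths in Q, and let σ and τ be permutations of {1,…,m} such that both concatenations p_{σ(1)}p_{σ(2)}⋯p_{σ(m)} and p_{τ(1)}p_{τ(2)}⋯p_{τ(m)} are defined (i.e., t(p_{σ(h)}) = s(p_{σ(h+1)}) for all 1 ≤ h ≤ m−1, and likewise for τ). If s(p_{σ(1)}) = s(p_{τ(1)}) and t(p_{σ(m)}) = t(p_{τ(m)}), then the concatenated paths p_{σ(1)}⋯p_{σ(m)} and p_{τ(1)}⋯p_{τ(m)} are equal as paths in Q. -/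
/-!
Both concatenations are walks from the same vertex using the same arrows with the same
multiplicities, and such walks coincide. Indeed, suppose they first differ at arrows `a ≠ b`,
both leaving a vertex `v`. Since `b` still has to be used by the first walk, that walk returns to
`s b = v` after taking `a`; shortcutting this closed walk at repeated vertices puts `a` on a cycle
through `v`. Likewise `b` lies on a cycle through `v`. By hypothesis the two cycles have the same
arrows, but a cycle leaves each of its vertices by only one arrow, so `a = b`.
-/

theorem List.exists_eq_append_cons_append_cons_of_not_nodup_map {α β : Type*} (f : α → β)
    {l : List α} (h : ¬(l.map f).Nodup) :
    ∃ l₁ x l₂ y l₃, l = l₁ ++ x :: (l₂ ++ y :: l₃) ∧ f x = f y := by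
  induction l with
  | nil => simp at h
  | cons a l ih =>
    by_cases hl : (l.map f).Nodup
    · obtain ⟨x, hx, hfx⟩ : ∃ x ∈ l, f x = f a := by
        simpa [List.nodup_cons, hl] using h
      obtain ⟨l₂, l₃, rfl⟩ := List.append_of_mem hx
      exact ⟨[], a, l₂, x, l₃, rfl, hfx.symm⟩
    · obtain ⟨l₁, x, l₂, y, l₃, rfl, hxy⟩ := ih hl
      exact ⟨a :: l₁, x, l₂, y, l₃, rfl, hxy⟩

namespace Quiv

def CyclesMeetingAgree (Q : Quiv) : Prop :=
  ∀ c₁ c₂ : Q.QPath, c₁.IsCycle → c₂.IsCycle →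
    (∃ v : Q.V, v ∈ c₁.arrows.map Q.s ∧ v ∈ c₂.arrows.map Q.s) →
    (∀ a : Q.A, a ∈ c₁.arrows ↔ a ∈ c₂.arrows)

variable {Q : Quiv}

namespace IsPathFrom

theorem cons_iff {v w : Q.V} {a : Q.A} {l : List Q.A} :
    Q.IsPathFrom v (a :: l) w ↔ v = Q.s a ∧ Q.IsPathFrom (Q.t a) l w := by
  constructor
  · rintro ⟨⟩; exact ⟨rfl, by assumption⟩
  · rintro ⟨rfl, h⟩; exact .cons a h

theorem of_append {u w : Q.V} {l₁ l₂ : List Q.A} (h : Q.IsPathFrom u (l₁ ++ l₂) w) :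
    ∃ v, Q.IsPathFrom u l₁ v ∧ Q.IsPathFrom v l₂ w := by
  induction l₁ generalizing u with
  | nil => exact ⟨u, .nil u, h⟩
  | cons a l ih =>
    obtain ⟨rfl, ht⟩ := cons_iff.mp (List.cons_append ▸ h)
    obtain ⟨v, h₁, h₂⟩ := ih ht
    exact ⟨v, .cons a h₁, h₂⟩

theorem of_append_cons {u w : Q.V} {l₁ l₂ : List Q.A} {b : Q.A}
    (h : Q.IsPathFrom u (l₁ ++ b :: l₂) w) : Q.IsPathFrom u l₁ (Q.s b) := by
  obtain ⟨v, h₁, h₂⟩ := h.of_append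
  obtain ⟨rfl, -⟩ := cons_iff.mp h₂
  exact h₁

theorem flatten_ofFn {n : ℕ} (q : Fin (n + 1) → Q.QPath)
    (h : ∀ i : Fin n, (q i.castSucc).tgt = (q i.succ).src) :
    Q.IsPathFrom (q 0).src (List.ofFn fun i => (q i).arrows).flatten (q (Fin.last n)).tgt := by
  induction n with
  | zero => simpa using (q 0).isPath
  | succ n ih =>
    rw [List.ofFn_succ, List.flatten_cons]
    refine (q 0).isPath.append ?_
    rw [← Fin.castSucc_zero, h 0]
    exact ih (fun i => q i.succ) fun i => h i.succ

theorem exists_shorter_closed_of_not_nodup {v : Q.V} {l : List Q.A} (h : Q.IsPathFrom v l v)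
    (hnd : ¬(l.map Q.s).Nodup) {a : Q.A} (ha : a ∈ l) :
    ∃ u l', Q.IsPathFrom u l' u ∧ a ∈ l' ∧ l'.length < l.length := by
  obtain ⟨l₁, x, l₂, y, l₃, rfl, hxy⟩ :=
    List.exists_eq_append_cons_append_cons_of_not_nodup_map Q.s hnd
  -- cutting at the repeated vertex `s x = s y` splits the closed walk into two shorter ones
  obtain ⟨u, h₁, hx⟩ := h.of_append
  obtain ⟨rfl, hx'⟩ := cons_iff.mp hx
  obtain ⟨w, h₂, hy⟩ := hx'.of_append
  obtain ⟨rfl, h₃⟩ := cons_iff.mp hy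
  have inner : Q.IsPathFrom (Q.s x) (x :: l₂) (Q.s x) := hxy ▸ .cons x h₂
  have outer : Q.IsPathFrom v (l₁ ++ y :: l₃) v := h₁.append (hxy ▸ .cons y h₃)
  have : a ∈ x :: l₂ ∨ a ∈ l₁ ++ y :: l₃ := by simp at ha ⊢; tauto
  rcases this with ha | ha
  · exact ⟨_, _, inner, ha, by simp; omega⟩
  · exact ⟨_, _, outer, ha, by simp⟩

theorem exists_isCycle_of_mem {v : Q.V} {l : List Q.A} (h : Q.IsPathFrom v l v) {a : Q.A}
    (ha : a ∈ l) : ∃ c : Q.QPath, c.IsCycle ∧ a ∈ c.arrows := by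
  by_cases hnd : (l.map Q.s).Nodup
  · exact ⟨⟨v, l, v, h⟩, ⟨List.ne_nil_of_mem ha, rfl, hnd⟩, ha⟩
  · obtain ⟨u, l', h', ha', hlt⟩ := h.exists_shorter_closed_of_not_nodup hnd ha
    exact h'.exists_isCycle_of_mem ha'
termination_by l.length

theorem exists_isCycle_of_cons_of_mem {v w : Q.V} {a b : Q.A} {l : List Q.A}
    (h : Q.IsPathFrom v (a :: l) w) (hb : b ∈ l) (hbv : Q.s b = v) :
    ∃ c : Q.QPath, c.IsCycle ∧ a ∈ c.arrows := by
  obtain ⟨l₁, l₂, rfl⟩ := List.append_of_mem hb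
  rw [← List.cons_append] at h
  have hclosed : Q.IsPathFrom v (a :: l₁) v := hbv ▸ h.of_append_cons
  exact hclosed.exists_isCycle_of_mem List.mem_cons_self

end IsPathFrom

theorem CyclesMeetingAgree.eq_of_src_eq (hQ : Q.CyclesMeetingAgree) {c₁ c₂ : Q.QPath}
    (h₁ : c₁.IsCycle) (h₂ : c₂.IsCycle) {a b : Q.A} (ha : a ∈ c₁.arrows) (hb : b ∈ c₂.arrows)
    (hab : Q.s a = Q.s b) : a = b :=
  have hbc₁ : b ∈ c₁.arrows :=
    (hQ c₁ c₂ h₁ h₂ ⟨Q.s a, List.mem_map_of_mem ha, hab ▸ List.mem_map_of_mem hb⟩ b).mpr hb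
  List.inj_on_of_nodup_map h₁.2.2 ha hbc₁ hab

theorem IsPathFrom.eq_of_perm (hQ : Q.CyclesMeetingAgree) {v w₁ w₂ : Q.V}
    {l₁ l₂ : List Q.A} (h₁ : Q.IsPathFrom v l₁ w₁) (h₂ : Q.IsPathFrom v l₂ w₂) (hl : l₁.Perm l₂) :
    l₁ = l₂ := by
  induction l₁ generalizing v l₂ with
  | nil => exact hl.nil_eq
  | cons a x ih =>
    rcases l₂ with _ | ⟨b, y⟩
    · exact absurd hl.eq_nil (List.cons_ne_nil a x)
    obtain ⟨hva, hx⟩ := cons_iff.mp h₁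
    obtain ⟨hvb, hy⟩ := cons_iff.mp h₂
    -- otherwise `a` and `b` lie on cycles through `v`, which must then contain both
    obtain rfl : a = b := by
      by_contra hab
      have hb : b ∈ x :=
        (List.mem_cons.mp (hl.mem_iff.mpr List.mem_cons_self)).resolve_left (Ne.symm hab)
      have ha : a ∈ y := (List.mem_cons.mp (hl.mem_iff.mp List.mem_cons_self)).resolve_left hab
      obtain ⟨c₁, hc₁, hac₁⟩ := h₁.exists_isCycle_of_cons_of_mem hb hvb.symm
      obtain ⟨c₂, hc₂, hbc₂⟩ := h₂.exists_isCycle_of_cons_of_mem ha hva.symm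
      exact hab (hQ.eq_of_src_eq hc₁ hc₂ hac₁ hbc₂ (hva.symm.trans hvb))
    rw [ih hx hy hl.cons_inv]

end Quiv

/-- key lemma. In a finite quiver where any two cycles sharing a vertex
have the same set of arrows, two defined concatenations (along permutations `σ`, `τ`) of
the same family of paths `p₁,…,p_m`, having the same start and the same end, are equal
as paths of `Q`. -/
theorem key_lemma_unicursal_paths_equal (Q : Quiv)
    (hcyc : ∀ c₁ c₂ : Q.QPath, c₁.IsCycle → c₂.IsCycle →
      (∃ v : Q.V, v ∈ c₁.arrows.map Q.s ∧ v ∈ c₂.arrows.map Q.s) →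
      (∀ a : Q.A, a ∈ c₁.arrows ↔ a ∈ c₂.arrows))
    (m : ℕ) (hm : 1 ≤ m) (p : Fin m → Q.QPath) (σ τ : Equiv.Perm (Fin m))
    (hσ : ∀ i j : Fin m, (j : ℕ) = (i : ℕ) + 1 → (p (σ i)).tgt = (p (σ j)).src)
    (hτ : ∀ i j : Fin m, (j : ℕ) = (i : ℕ) + 1 → (p (τ i)).tgt = (p (τ j)).src)
    (hs : (p (σ ⟨0, by omega⟩)).src = (p (τ ⟨0, by omega⟩)).src) :
    (List.ofFn fun i => (p (σ i)).arrows).flatten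
      = (List.ofFn fun i => (p (τ i)).arrows).flatten := by
  obtain ⟨n, rfl⟩ : ∃ n, m = n + 1 := ⟨m - 1, by omega⟩
  have hpσ := Quiv.IsPathFrom.flatten_ofFn (fun i => p (σ i)) fun i => hσ _ _ rfl
  have hpτ := Quiv.IsPathFrom.flatten_ofFn (fun i => p (τ i)) fun i => hτ _ _ rfl
  have hsrc : (p (σ 0)).src = (p (τ 0)).src := hs
  rw [hsrc] at hpσ
  exact Quiv.IsPathFrom.eq_of_perm hcyc hpσ hpτ
    ((σ.ofFn_comp_perm fun j => (p j).arrows).trans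
      (τ.ofFn_comp_perm fun j => (p j).arrows).symm).flatten
end

section
/- Let F be a field. For every nonzero element f of the free associative unital F-algebra F⟨X⟩ = FreeAlgebra F ℕ there exist n ≥ 1 and an F-algebra homomorphism φ : F⟨X⟩ → UT_n(F) with φ(f) ≠ 0. Equivalently, the intersection over all n ≥ 1 of the sets of polynomial identities of UT_n(F) is {0}; in particular, the directed union of the algebras UT_n(F) (the path algebra of the infinite equioriented quiver A_∞) is not PI. -/
/-- The subalgebra of upper triangular `n × n` matrices over `F`. -/
def UT (F : Type) [Field F] (n : ℕ) : Subalgebra F (Matrix (Fin n) (Fin n) F) where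
  carrier := {M | ∀ i j : Fin n, j < i → M i j = 0}
  zero_mem' := fun _ _ _ => rfl
  one_mem' := fun i j hij => Matrix.one_apply_ne' (ne_of_lt hij)
  add_mem' := fun {M N} hM hN i j hij => by
    simp [Matrix.add_apply, hM i j hij, hN i j hij]
  mul_mem' := fun {M N} hM hN i j hij => by
    rw [Matrix.mul_apply]
    apply Finset.sum_eq_zero
    intro k _
    rcases lt_or_ge k i with h | h
    · rw [hM i k h, zero_mul]
    · rw [hN k j (lt_of_lt_of_le hij h), mul_zero]
  algebraMap_mem' := fun c i j hij => by
    rw [Matrix.algebraMap_matrix_apply, if_neg hij.ne']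

/-!
Given `f ≠ 0`, choose a word `w = x_{i_1} ⋯ x_{i_d}` whose coefficient in `f` is nonzero and
send each variable `x` to the sum of the matrix units `E_{p-1,p}` of `UT_{d+1}(F)` over the
positions `p` with `i_p = x`. A product of such units is nonzero only along the path
`0 → 1 → ⋯` read off `w`, so the `(0, d)` entry of the image of a word `u` is `1` if `u = w`
and `0` otherwise. Hence the `(0, d)` entry of the image of `f` is the coefficient of `w` in `f`.
-/

namespace FreeAlgebra

variable {R X A : Type*} [CommSemiring R] [Semiring A] [Algebra R A]

theorem lift_eq_monoidAlgebraLift_comp (g : X → A) :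
    lift R g = (MonoidAlgebra.lift R A (FreeMonoid X) (FreeMonoid.lift g)).comp
      (equivMonoidAlgebraFreeMonoid : FreeAlgebra R X ≃ₐ[R] _).toAlgHom :=
  hom_ext <| funext fun x => by simp [equivMonoidAlgebraFreeMonoid]

theorem apply_lift_eq_coeff (g : X → A) (ℓ : A →ₗ[R] R) (w : FreeMonoid X)
    (hw : ℓ (FreeMonoid.lift g w) = 1) (hne : ∀ u ≠ w, ℓ (FreeMonoid.lift g u) = 0)
    (f : FreeAlgebra R X) :
    ℓ (lift R g f) = (equivMonoidAlgebraFreeMonoid f).coeff w := by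
  rw [lift_eq_monoidAlgebraLift_comp, AlgHom.comp_apply, MonoidAlgebra.lift_apply,
    Finsupp.sum, map_sum]
  simp only [AlgEquiv.coe_toAlgHom, map_smul, smul_eq_mul]
  rw [Finset.sum_eq_single w (fun u _ hu => by rw [hne u hu, mul_zero])
    (fun hw' => by rw [Finsupp.notMem_support_iff.mp hw', zero_mul]), hw, mul_one]

end FreeAlgebra

theorem List.cons_prefix_drop_iff {X : Type*} (w u : List X) (x : X) (p : ℕ) :
    x :: u <+: w.drop p ↔ w[p]? = some x ∧ u <+: w.drop (p + 1) := by
  rcases lt_or_ge p w.length with hp | hp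
  · rw [List.drop_eq_getElem_cons hp, List.cons_prefix_cons, List.getElem?_eq_getElem hp]
    simp [eq_comm]
  · simp [List.drop_eq_nil_of_le hp, List.getElem?_eq_none hp]

section letterMatrix

variable (R : Type*) {X : Type*} [Semiring R] [DecidableEq X]

def letterMatrix (w : List X) (x : X) : Matrix (Fin (w.length + 1)) (Fin (w.length + 1)) R :=
  Matrix.of fun p q => if (q : ℕ) = p + 1 ∧ w[(p : ℕ)]? = some x then 1 else 0

theorem prod_map_letterMatrix_apply (w u : List X) (p q : Fin (w.length + 1)) :
    (u.map (letterMatrix R w)).prod p q =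
      if (q : ℕ) = p + u.length ∧ u <+: w.drop p then 1 else 0 := by
  induction u generalizing p with
  | nil => simp [Matrix.one_apply, Fin.ext_iff, eq_comm]
  | cons x u ih =>
    rw [List.map_cons, List.prod_cons, Matrix.mul_apply]
    simp only [List.cons_prefix_drop_iff]
    by_cases hx : w[(p : ℕ)]? = some x
    · have hp : (p : ℕ) + 1 < w.length + 1 := by
        simpa using (List.getElem?_eq_some_iff.mp hx).1
      rw [Finset.sum_eq_single ⟨p + 1, hp⟩ (fun r _ hr => ?_) (by simp), ih]
      · simp [letterMatrix, hx, add_assoc, add_comm 1]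
      · rw [letterMatrix, Matrix.of_apply, if_neg (fun h => hr (Fin.ext h.1)), zero_mul]
    · simp [letterMatrix, hx]

theorem prod_map_letterMatrix_apply_zero_last (w u : List X) :
    (u.map (letterMatrix R w)).prod 0 (Fin.last _) = if u = w then 1 else 0 := by
  rw [prod_map_letterMatrix_apply]
  simp only [Fin.val_zero, Fin.val_last, zero_add, List.drop_zero]
  congr 1
  exact propext ⟨fun h => h.2.eq_of_length h.1.symm, fun h => h ▸ ⟨rfl, List.prefix_refl _⟩⟩

end letterMatrix

theorem letterMatrix_mem_UT (F : Type) [Field F] {X : Type*} [DecidableEq X] (w : List X)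
    (x : X) : letterMatrix F w x ∈ UT F (w.length + 1) :=
  fun _ _ hqp => if_neg fun h => by omega

theorem lift_letterMatrix_apply_zero_last (R : Type*) {X : Type*} [CommSemiring R]
    [DecidableEq X] (w : FreeMonoid X) (f : FreeAlgebra R X) :
    FreeAlgebra.lift R (letterMatrix R w.toList) f 0 (Fin.last _) =
      (FreeAlgebra.equivMonoidAlgebraFreeMonoid f).coeff w := by
  refine FreeAlgebra.apply_lift_eq_coeff (letterMatrix R w.toList)
    (Matrix.entryLinearMap R R 0 (Fin.last _)) w ?_ (fun u hu => ?_) f <;>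
    simp only [Matrix.entryLinearMap_apply, FreeMonoid.lift_apply,
      prod_map_letterMatrix_apply_zero_last]
  exacts [if_pos trivial, if_neg (FreeMonoid.toList.injective.ne hu)]

/-- Every nonzero element of the free algebra `F⟨X⟩` fails to be a
polynomial identity of `UT_n(F)` for some `n ≥ 1`: the intersection of the T-ideals of
all the `UT_n(F)` is zero, so the path algebra of the infinite equioriented
quiver `A_∞` is not PI. -/
theorem free_algebra_separated_by_upper_triangular (F : Type) [Field F]
    (f : FreeAlgebra F ℕ) (hf : f ≠ 0) :
    ∃ n : ℕ, 1 ≤ n ∧ ∃ φ : FreeAlgebra F ℕ →ₐ[F] (UT F n), φ f ≠ 0 := by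
  obtain ⟨w, hw⟩ : ∃ w, (FreeAlgebra.equivMonoidAlgebraFreeMonoid f).coeff w ≠ 0 := by
    by_contra! h
    exact hf (FreeAlgebra.equivMonoidAlgebraFreeMonoid.injective (by ext; simp [h]))
  let φ : FreeAlgebra F ℕ →ₐ[F] UT F (w.toList.length + 1) :=
    FreeAlgebra.lift F fun x => ⟨letterMatrix F w.toList x, letterMatrix_mem_UT F w.toList x⟩
  have hφ : (UT F _).val.comp φ = FreeAlgebra.lift F (letterMatrix F w.toList) :=
    FreeAlgebra.hom_ext <| funext fun x => by simp [φ]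
  refine ⟨_, Nat.le_add_left 1 _, φ, fun h => hw ?_⟩
  rw [← lift_letterMatrix_apply_zero_last, ← hφ, AlgHom.comp_apply, h]
  rfl
end

section
/- Let F be a field, n ≥ 1, and let C_n be the oriented n-cycle quiver: vertex set ℤ/nℤ with, for each i, one arrow from i to i+1. Let (A, b) be a path algebra of C_n over F. Then A satisfies no nonzero multilinear identity of degree less than 2n: for every d with 1 ≤ d ≤ 2n−1 and every family of scalars (c_σ)_{σ ∈ S_d}, if Σ_{σ ∈ S_d} c_σ a_{σ(1)}a_{σ(2)}⋯a_{σ(d)} = 0 for all a₁,…,a_d ∈ A, then c_σ = 0 for every σ ∈ S_d. (Hence the minimal degree of a polynomial identity of A is 2n.) -/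
/-- The oriented `n`-cycle quiver: vertices `ℤ/nℤ` and, for each `i`, one arrow `i → i+1`. -/
def CnQuiver (n : ℕ) (hn : 0 < n) : Quiv where
  V := ZMod n
  A := ZMod n
  fintV := @ZMod.fintype n ⟨by omega⟩
  fintA := @ZMod.fintype n ⟨by omega⟩
  s := fun i => i
  t := fun i => i + 1

/-!
To see `c τ = 0`, evaluate the identity on the first `d` terms of the staircase
`e₀, α₀, e₁, α₁, …, e_{n-1}, α_{n-1}` of lazy paths and arrows of the cycle, permuted by `τ⁻¹`.
A product of basis elements is a basis element (hence nonzero) when the paths compose in the given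
order and zero otherwise. Among the first `2n - 1` terms of the staircase, the target of a term is
the source only of later terms, so the only composable order is the original one and the identity
collapses to `c τ • b r = 0`.
-/

namespace PathAlgebra

variable {F : Type} [Field F] {Q : Quiv} {A : Type} [Ring A] [Algebra F A]
  (P : PathAlgebra F Q A)

theorem exists_prod_map_b_eq_b_of_isChain (p : Q.QPath) (L : List Q.QPath)
    (hpL : (p :: L).IsChain (fun x y => x.tgt = y.src)) :
    ∃ r : Q.QPath, r.src = p.src ∧ ((p :: L).map P.b).prod = P.b r := by
  induction L generalizing p with
  | nil => exact ⟨p, rfl, by simp⟩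
  | cons q L ih =>
    obtain ⟨hpq, hqL⟩ := List.isChain_cons_cons.mp hpL
    obtain ⟨r, hr_src, hr⟩ := ih q hqL
    refine ⟨p.comp r (hpq.trans hr_src.symm), rfl, ?_⟩
    rw [List.map_cons, List.prod_cons, hr, P.mul_comp]

theorem prod_map_b_eq_zero_of_not_isChain :
    ∀ L : List Q.QPath, ¬ L.IsChain (fun x y => x.tgt = y.src) → (L.map P.b).prod = 0
  | [], h => absurd .nil h
  | [p], h => absurd (List.isChain_singleton p) h
  | p :: q :: L, h => by
    rw [List.map_cons, List.prod_cons]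
    by_cases hpq : p.tgt = q.src
    · have hqL : ¬ (q :: L).IsChain (fun x y => x.tgt = y.src) :=
        fun hqL => h (hqL.cons_cons hpq)
      rw [prod_map_b_eq_zero_of_not_isChain (q :: L) hqL, MulZeroClass.mul_zero]
    · rw [List.map_cons, List.prod_cons, ← mul_assoc, P.mul_zero p q hpq, zero_mul]

theorem prod_map_b_ne_zero_of_isChain {L : List Q.QPath} (hL : L ≠ [])
    (h : L.IsChain (fun x y => x.tgt = y.src)) : (L.map P.b).prod ≠ 0 := by
  obtain ⟨p, L, rfl⟩ := List.exists_cons_of_ne_nil hL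
  obtain ⟨r, -, hr⟩ := P.exists_prod_map_b_eq_b_of_isChain p L h
  exact hr ▸ P.indep.ne_zero r

end PathAlgebra

theorem coeff_eq_zero_of_multilinear_identity {R M : Type*} [DivisionRing R] [Semiring M]
    [Module R M] {d : ℕ} (c : Equiv.Perm (Fin d) → R)
    (hc : ∀ a : Fin d → M, ∑ σ : Equiv.Perm (Fin d), c σ • (List.ofFn fun i => a (σ i)).prod = 0)
    (x : Fin d → M) (hx : (List.ofFn x).prod ≠ 0)
    (hx_perm : ∀ ρ : Equiv.Perm (Fin d), ρ ≠ 1 → (List.ofFn fun i => x (ρ i)).prod = 0)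
    (τ : Equiv.Perm (Fin d)) : c τ = 0 := by
  have hsum : ∑ σ, c σ • (List.ofFn fun i => x ((τ⁻¹ * σ) i)).prod = 0 :=
    hc fun i => x (τ⁻¹ i)
  rw [Fintype.sum_eq_single τ fun σ hσ =>
    smul_eq_zero_of_right _ (hx_perm (τ⁻¹ * σ) (mt inv_mul_eq_one.mp (Ne.symm hσ))),
    inv_mul_cancel] at hsum
  exact (smul_eq_zero_iff_left hx).mp hsum

theorem Equiv.Perm.eq_one_of_lt_succ {d : ℕ} (ρ : Equiv.Perm (Fin d))
    (h : ∀ (i : ℕ) (hi : i + 1 < d), ρ ⟨i, by omega⟩ < ρ ⟨i + 1, hi⟩) : ρ = 1 := by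
  obtain _ | e := d
  · exact Subsingleton.elim _ _
  have hρ : StrictMono ρ := Fin.strictMono_iff_lt_succ.mpr fun i => h i i.succ.isLt
  exact DFunLike.coe_injective <| (hρ.range_inj strictMono_id).mp (by simp)

namespace CnQuiver

variable (n : ℕ) (hn : 0 < n)

def staircase (k : ℕ) : (CnQuiver n hn).QPath :=
  if k % 2 = 0 then Quiv.QPath.lazy _ ((k / 2 : ℕ) : ZMod n)
  else Quiv.QPath.ofArrow _ ((k / 2 : ℕ) : ZMod n)

theorem staircase_src (k : ℕ) : (staircase n hn k).src = ((k / 2 : ℕ) : ZMod n) := by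
  unfold staircase; split <;> rfl

theorem staircase_tgt (k : ℕ) : (staircase n hn k).tgt = (((k + 1) / 2 : ℕ) : ZMod n) := by
  unfold staircase
  split
  · rw [show (k + 1) / 2 = k / 2 by omega]; rfl
  · rw [show (k + 1) / 2 = k / 2 + 1 by omega, Nat.cast_succ]; rfl

theorem staircase_tgt_eq_src_succ (k : ℕ) :
    (staircase n hn k).tgt = (staircase n hn (k + 1)).src := by
  rw [staircase_tgt, staircase_src]

variable {n hn}

-- `j + 1 < 2 * n` excludes the last arrow `α_{n-1}`, whose target `n = 0` is the source of `e₀`.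
theorem lt_of_staircase_tgt_eq_src {j k : ℕ} (hj : j + 1 < 2 * n) (hk : k < 2 * n) (hjk : j ≠ k)
    (h : (staircase n hn j).tgt = (staircase n hn k).src) : j < k := by
  replace h : (((j + 1) / 2 : ℕ) : ZMod n) = ((k / 2 : ℕ) : ZMod n) := by
    rwa [staircase_tgt, staircase_src] at h
  rw [ZMod.natCast_eq_natCast_iff' _ _ n, Nat.mod_eq_of_lt (by omega),
    Nat.mod_eq_of_lt (by omega)] at h
  omega

end CnQuiver

/-- A path algebra of the oriented `n`-cycle satisfies no nonzero
multilinear identity of degree `d < 2n`: if a multilinear combination vanishes on all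
tuples, all its coefficients are zero. -/
theorem pathAlgebra_cycle_no_low_degree_identity (F : Type) [Field F] (n : ℕ) (hn : 0 < n)
    (A : Type) [Ring A] [Algebra F A] (P : PathAlgebra F (CnQuiver n hn) A)
    (d : ℕ) (hd1 : 1 ≤ d) (hd2 : d ≤ 2 * n - 1)
    (c : Equiv.Perm (Fin d) → F)
    (hc : ∀ a : Fin d → A,
      ∑ σ : Equiv.Perm (Fin d), c σ • (List.ofFn fun i => a (σ i)).prod = 0) :
    ∀ σ : Equiv.Perm (Fin d), c σ = 0 := by
  refine coeff_eq_zero_of_multilinear_identity c hc (P.b ∘ CnQuiver.staircase n hn ∘ Fin.val)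
    ?_ fun ρ hρ => ?_
  · rw [← List.map_ofFn]
    refine P.prod_map_b_ne_zero_of_isChain (by rw [Ne, List.ofFn_eq_nil_iff]; omega)
      (List.isChain_ofFn.mpr fun i _ => CnQuiver.staircase_tgt_eq_src_succ n hn i)
  · change (List.ofFn (P.b ∘ (CnQuiver.staircase n hn ∘ Fin.val ∘ ρ))).prod = 0
    rw [← List.map_ofFn]
    refine P.prod_map_b_eq_zero_of_not_isChain _ fun hchain =>
      hρ (ρ.eq_one_of_lt_succ fun i hi => ?_)
    refine CnQuiver.lt_of_staircase_tgt_eq_src (by omega) (by omega) ?_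
      (List.isChain_ofFn.mp hchain i hi)
    exact Fin.val_injective.ne (ρ.injective.ne (by simp))
end
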